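/- arXiv:1108.0477 — 2 statements merged into one kernel-verified Lean document; each statement's English description precedes it below -/
import Mathlib

section
/- For every τ ≥ 0, the soft-thresholding risk tends to 1 + τ² as the signal amplitude grows: lim_{μ → ∞} r(μ, τ) = 1 + τ². -/
open MeasureTheory Filter

/-- Complex soft thresholding: `η(x;τ) = (1 - τ/|x|)·x` if `|x| > τ`, else `0`. -/
noncomputable def softThresh (x : ℂ) (τ : ℝ) : ℂ :=
  if τ < ‖x‖ then ((1 - τ / ‖x‖ : ℝ) : ℂ) * x else 0

/-- Risk of complex soft thresholding at amplitude `μ`: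
`r(μ,τ) = ∫_{ℝ²} |η(μ + z₁ + i z₂; τ) − μ|² (1/π) e^{−(z₁²+z₂²)} dz₁ dz₂`. -/
noncomputable def softRisk (μ τ : ℝ) : ℝ :=
  ∫ z : ℝ × ℝ,
    ‖softThresh ((μ : ℂ) + (z.1 : ℂ) + Complex.I * (z.2 : ℂ)) τ - (μ : ℂ)‖ ^ 2 *
      ((1 / Real.pi) * Real.exp (-(z.1 ^ 2 + z.2 ^ 2)))

/-!
Write `Z = Z₁ + i Z₂`. Once `|μ + Z| > τ`, soft thresholding subtracts `τ (μ + Z)/|μ + Z|`, and this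
unit vector tends to `1` as `μ → ∞`; so `|η(μ + Z; τ) − μ|² → |Z − τ|²`, whose expectation is
`E[(Z₁ − τ)²] + E[Z₂²] = 1 + τ²`. Since `η` moves no point by more than `τ`, the integrand is
dominated by `2 (|Z|² + τ²)`, and dominated convergence gives the limit.
-/

open ProbabilityTheory Complex
open scoped NNReal Real Topology

lemma softThresh_of_lt {x : ℂ} {τ : ℝ} (h : τ < ‖x‖) : softThresh x τ = x - τ * (x / ‖x‖) := by
  rw [softThresh, if_pos h]
  push_cast
  ring

lemma norm_softThresh_sub_self_le {τ : ℝ} (hτ : 0 ≤ τ) (x : ℂ) : ‖softThresh x τ - x‖ ≤ τ := by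
  by_cases h : τ < ‖x‖
  · rw [softThresh_of_lt h, sub_sub_cancel_left, norm_neg, norm_mul, norm_div, norm_real, norm_real,
      Real.norm_of_nonneg hτ, norm_norm]
    exact mul_le_of_le_one_right hτ (div_self_le_one _)
  · rw [softThresh, if_neg h, zero_sub, norm_neg]
    exact not_lt.1 h

lemma measurable_softThresh (τ : ℝ) : Measurable (softThresh · τ) := by
  unfold softThresh
  exact Measurable.ite (measurableSet_lt measurable_const measurable_norm) (by fun_prop)
    measurable_const

lemma tendsto_norm_ofReal_add_atTop (c : ℂ) :
    Tendsto (fun μ : ℝ ↦ ‖(μ : ℂ) + c‖) atTop atTop :=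
  tendsto_norm_cobounded_atTop.comp <|
    (tendsto_add_const_cobounded c).comp (RCLike.tendsto_ofReal_atTop_cobounded ℂ)

lemma norm_div_norm_sub_one_le {x : ℂ} (hx : x ≠ 0) {μ : ℝ} (hμ : 0 ≤ μ) :
    ‖x / ‖x‖ - 1‖ ≤ 2 * ‖x - μ‖ / ‖x‖ := by
  have hx' : (‖x‖ : ℂ) ≠ 0 := by simpa using hx
  have h_norm : |‖x‖ - μ| ≤ ‖x - μ‖ := by
    simpa [abs_of_nonneg hμ] using abs_norm_sub_norm_le x (μ : ℂ)
  rw [div_sub_one hx', norm_div, norm_real, Real.norm_of_nonneg (norm_nonneg x)]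
  gcongr
  calc ‖x - ‖x‖‖ ≤ ‖x - μ‖ + ‖((μ - ‖x‖ : ℝ) : ℂ)‖ := by
        push_cast; exact norm_sub_le_norm_sub_add_norm_sub _ _ _
    _ ≤ 2 * ‖x - μ‖ := by rw [norm_real, Real.norm_eq_abs, abs_sub_comm]; linarith

lemma tendsto_ofReal_add_div_norm (c : ℂ) :
    Tendsto (fun μ : ℝ ↦ ((μ : ℂ) + c) / ‖(μ : ℂ) + c‖) atTop (𝓝 1) := by
  have h_far := tendsto_norm_ofReal_add_atTop c
  rw [tendsto_iff_norm_sub_tendsto_zero]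
  refine squeeze_zero' (Eventually.of_forall fun _ ↦ norm_nonneg _) ?_
    (tendsto_const_nhds (x := 2 * ‖c‖) |>.div_atTop h_far)
  filter_upwards [h_far.eventually_gt_atTop 0, eventually_ge_atTop 0] with μ hx hμ
  simpa using norm_div_norm_sub_one_le (norm_pos_iff.1 hx) hμ

lemma tendsto_softThresh_ofReal_add_sub (τ : ℝ) (c : ℂ) :
    Tendsto (fun μ : ℝ ↦ softThresh (μ + c) τ - μ) atTop (𝓝 (c - τ)) := by
  have h_lim := tendsto_const_nhds (x := c).sub
    (tendsto_const_nhds (x := (τ : ℂ)).mul (tendsto_ofReal_add_div_norm c))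
  rw [mul_one] at h_lim
  refine h_lim.congr' ?_
  filter_upwards [(tendsto_norm_ofReal_add_atTop c).eventually_gt_atTop τ] with μ hμ
  rw [softThresh_of_lt hμ]
  ring

lemma norm_sq_softThresh_ofReal_add_sub_le {τ : ℝ} (hτ : 0 ≤ τ) (μ : ℝ) (c : ℂ) :
    ‖softThresh (μ + c) τ - μ‖ ^ 2 ≤ 2 * (‖c‖ ^ 2 + τ ^ 2) := by
  calc ‖softThresh (μ + c) τ - μ‖ ^ 2
      = ‖(softThresh (μ + c) τ - (μ + c)) + c‖ ^ 2 := by ring_nf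
    _ ≤ (τ + ‖c‖) ^ 2 := by
      gcongr
      exact (norm_add_le _ _).trans (by gcongr; exact norm_softThresh_sub_self_le hτ _)
    _ ≤ 2 * (‖c‖ ^ 2 + τ ^ 2) := by rw [add_comm τ]; exact add_sq_le

namespace ProbabilityTheory

lemma integral_sq_gaussianReal (m : ℝ) (v : ℝ≥0) :
    ∫ x, x ^ 2 ∂gaussianReal m v = v + m ^ 2 := by
  have h := variance_eq_sub (memLp_id_gaussianReal (μ := m) (v := v) 2)
  simp only [variance_id_gaussianReal, Pi.pow_apply, id, integral_id_gaussianReal] at h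
  linarith

lemma integral_sub_sq_gaussianReal (m a : ℝ) (v : ℝ≥0) :
    ∫ x, (x - a) ^ 2 ∂gaussianReal m v = v + (m - a) ^ 2 := by
  rw [← integral_sq_gaussianReal, ← gaussianReal_map_sub_const,
    integral_map (by fun_prop) (by fun_prop)]

lemma integrable_sub_sq_gaussianReal (m a : ℝ) (v : ℝ≥0) :
    Integrable (fun x ↦ (x - a) ^ 2) (gaussianReal m v) :=
  ((memLp_id_gaussianReal 2).sub (memLp_const a)).integrable_sq

lemma gaussianPDFReal_zero_half (x : ℝ) :
    gaussianPDFReal 0 2⁻¹ x = (√π)⁻¹ * Real.exp (-x ^ 2) := by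
  rw [gaussianPDFReal, NNReal.coe_inv, NNReal.coe_ofNat, sub_zero, mul_right_comm,
    mul_inv_cancel₀ two_ne_zero, one_mul, div_one]

end ProbabilityTheory

/-- The law of `Z₁ + i Z₂`, `Z₁, Z₂ ~ N(0, 1/2)` independent, in coordinates `(re, im)`. -/
noncomputable def stdComplexGaussian : Measure (ℝ × ℝ) :=
  (gaussianReal 0 2⁻¹).prod (gaussianReal 0 2⁻¹)

instance : IsProbabilityMeasure stdComplexGaussian := by
  unfold stdComplexGaussian; infer_instance

lemma integral_stdComplexGaussian (f : ℝ × ℝ → ℝ) :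
    ∫ z, f z ∂stdComplexGaussian = ∫ z, f z * ((1 / π) * Real.exp (-(z.1 ^ 2 + z.2 ^ 2))) := by
  rw [stdComplexGaussian, gaussianReal_of_var_ne_zero _ (by norm_num),
    prod_withDensity (measurable_gaussianPDF _ _) (measurable_gaussianPDF _ _),
    ← Measure.volume_eq_prod, integral_withDensity_eq_integral_toReal_smul (by fun_prop)
      (ae_of_all _ fun _ ↦ ENNReal.mul_lt_top gaussianPDF_lt_top gaussianPDF_lt_top)]
  congr 1 with z
  rw [ENNReal.toReal_mul, toReal_gaussianPDF, toReal_gaussianPDF, gaussianPDFReal_zero_half,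
    gaussianPDFReal_zero_half, smul_eq_mul, neg_add, Real.exp_add]
  field_simp
  rw [Real.sq_sqrt Real.pi_pos.le, mul_comm]

lemma norm_sq_ofReal_add_I_mul_sub (x y a : ℝ) :
    ‖(x : ℂ) + I * y - a‖ ^ 2 = (x - a) ^ 2 + y ^ 2 := by
  rw [Complex.sq_norm, ← normSq_add_mul_I]
  congr 1
  push_cast
  ring

lemma integrable_norm_sq_sub_stdComplexGaussian (a : ℝ) :
    Integrable (fun z : ℝ × ℝ ↦ ‖(z.1 : ℂ) + I * z.2 - a‖ ^ 2) stdComplexGaussian := by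
  simp_rw [norm_sq_ofReal_add_I_mul_sub]
  exact ((integrable_sub_sq_gaussianReal 0 a _).comp_fst _).add
    (by simpa using (integrable_sub_sq_gaussianReal 0 0 _).comp_snd _)

lemma integral_norm_sq_sub_stdComplexGaussian (a : ℝ) :
    ∫ z, ‖(z.1 : ℂ) + I * z.2 - a‖ ^ 2 ∂stdComplexGaussian = 1 + a ^ 2 := by
  simp_rw [norm_sq_ofReal_add_I_mul_sub]
  rw [stdComplexGaussian, integral_add ((integrable_sub_sq_gaussianReal 0 a _).comp_fst _)
    (by simpa using (integrable_sub_sq_gaussianReal 0 0 _).comp_snd _),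
    integral_fun_fst (fun x ↦ (x - a) ^ 2), integral_fun_snd (fun y ↦ y ^ 2),
    integral_sub_sq_gaussianReal, integral_sq_gaussianReal]
  simp only [probReal_univ, one_smul, NNReal.coe_inv, NNReal.coe_ofNat]
  ring

/-- For every `τ ≥ 0`, the soft-thresholding risk tends to `1 + τ²` as the signal
amplitude grows: `lim_{μ → ∞} r(μ, τ) = 1 + τ²`. -/
theorem softRisk_tendsto_atTop (τ : ℝ) (hτ : 0 ≤ τ) :
    Tendsto (fun μ : ℝ => softRisk μ τ) atTop (nhds (1 + τ ^ 2)) := by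
  set c : ℝ × ℝ → ℂ := fun z ↦ (z.1 : ℂ) + I * z.2
  have h_risk (μ : ℝ) :
      softRisk μ τ = ∫ z, ‖softThresh (μ + c z) τ - μ‖ ^ 2 ∂stdComplexGaussian := by
    simp only [softRisk, integral_stdComplexGaussian, c, add_assoc]
  simp_rw [h_risk, ← integral_norm_sq_sub_stdComplexGaussian τ]
  refine tendsto_integral_filter_of_dominated_convergence (fun z ↦ 2 * (‖c z‖ ^ 2 + τ ^ 2))
    (Eventually.of_forall fun μ ↦ ?_) (Eventually.of_forall fun μ ↦ ae_of_all _ fun z ↦ ?_)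
    ?_ (ae_of_all _ fun z ↦ ?_)
  · exact (((measurable_softThresh τ).comp (by fun_prop)).sub_const _).norm.pow_const _
      |>.aestronglyMeasurable
  · rw [Real.norm_of_nonneg (by positivity)]
    exact norm_sq_softThresh_ofReal_add_sub_le hτ μ (c z)
  · simpa [c] using ((integrable_norm_sq_sub_stdComplexGaussian 0).add
      (integrable_const (τ ^ 2))).const_mul 2
  · exact ((continuous_norm.pow 2).tendsto _).comp (tendsto_softThresh_ofReal_add_sub τ (c z))
end

section
/- Let ν be a probability measure on ℂ, δ > 0, τ ≥ 0, σ = 0, ε = ν({x : x ≠ 0}), and L = ( (1−ε)·2χ₂(τ) + ε·(1+τ²) ) / δ (the slope of the noiseless MSE map at m = 0). Then the state-evolution iterates m_{t+1} = Ψ(m_t) with any initial value m₀ ≥ 0 satisfy m_t ≤ L^t · m₀ for every t ≥ 0. -/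
/-!
With `σ = 0`, `Ψ(m) = (m/δ) ∫ r(|x|/√(m/δ), τ) dν(x)`. At the atom `x = 0` the risk is
`r(0, τ) = 2 χ₂(τ)`, computed in polar coordinates, and at every amplitude `μ ≥ 0` it is at most
`1 + τ²`: soft thresholding at `τ` moves `μ + w` no further from `μ` than the shift `w ↦ w - τ`
does, and `E |W - τ|² = 1 + τ²` for a standard complex Gaussian `W`. Hence `0 ≤ Ψ(m) ≤ L m` for
`m ≥ 0`, and the iterates decay geometrically.
-/

open MeasureTheory Filter

/-- `χ₂(τ) = ∫_τ^∞ ω (ω − τ)² e^{−ω²} dω`. -/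
noncomputable def chi2 (τ : ℝ) : ℝ :=
  ∫ ω in Set.Ioi τ, ω * (ω - τ) ^ 2 * Real.exp (-ω ^ 2)

/-- The MSE map `Ψ(m) = (σ² + m/δ) ∫ r(|x|/√(σ² + m/δ), τ) dν(x)`
(with the convention `Ψ(0) = 0` when `σ = 0`, via division by zero). -/
noncomputable def mseMap (ν : Measure ℂ) (δ σ τ m : ℝ) : ℝ :=
  (σ ^ 2 + m / δ) *
    ∫ x, softRisk (‖x‖ / Real.sqrt (σ ^ 2 + m / δ)) τ ∂ν

open Real Set

lemma integral_complex_fun_norm (f : ℝ → ℝ) :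
    ∫ w : ℂ, f ‖w‖ = 2 * π * ∫ r in Ioi 0, r * f r := by
  have hball : volume.real (Metric.ball (0 : ℂ) 1) = π := by
    simp [Measure.real, Complex.volume_ball]
  rw [integral_fun_norm_addHaar, Complex.finrank_real_complex, hball]
  simp only [nsmul_eq_mul, smul_eq_mul]
  norm_num [mul_assoc]

lemma integrable_complex_fun_norm_iff {f : ℝ → ℝ} :
    Integrable (fun w : ℂ => f ‖w‖) ↔ IntegrableOn (fun r => r * f r) (Ioi 0) := by
  simp [integrable_fun_norm_addHaar, Complex.finrank_real_complex]

lemma integrableOn_Ioi_pow_mul_exp_neg_sq (k : ℕ) :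
    IntegrableOn (fun r : ℝ => r ^ k * exp (-r ^ 2)) (Ioi 0) := by
  have h := integrableOn_rpow_mul_exp_neg_rpow (p := 2) (s := k)
    (by linarith [k.cast_nonneg (α := ℝ)]) two_pos
  simpa only [rpow_natCast, rpow_two] using h

lemma integral_Ioi_pow_mul_exp_neg_sq (k : ℕ) :
    ∫ r in Ioi 0, r ^ (2 * k + 1) * exp (-r ^ 2) = k.factorial / 2 := by
  have h := integral_rpow_mul_exp_neg_rpow (p := 2) (q := (2 * k + 1 : ℕ)) two_pos
    (by linarith [(2 * k + 1 : ℕ).cast_nonneg (α := ℝ)])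
  simp only [rpow_natCast, rpow_two] at h
  rw [h]
  push_cast
  rw [show ((2 * k + 1 + 1) / 2 : ℝ) = k + 1 by ring, Gamma_nat_eq_factorial]
  ring

noncomputable def complexGaussianPDF (w : ℂ) : ℝ := 1 / π * exp (-‖w‖ ^ 2)

lemma complexGaussianPDF_nonneg (w : ℂ) : 0 ≤ complexGaussianPDF w := by
  unfold complexGaussianPDF
  positivity

lemma complexGaussianPDF_neg (w : ℂ) : complexGaussianPDF (-w) = complexGaussianPDF w := by
  simp [complexGaussianPDF]

-- exponents written as `2 * k + 1` so that `integral_Ioi_pow_mul_exp_neg_sq` applies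
private lemma mul_sq_add_mul_gaussian_eq (c r : ℝ) :
    r * ((r ^ 2 + c) * (1 / π * exp (-r ^ 2)))
      = π⁻¹ * (r ^ (2 * 1 + 1) * exp (-r ^ 2)) + c / π * (r ^ (2 * 0 + 1) * exp (-r ^ 2)) := by
  ring

lemma integrable_norm_sq_add_mul_complexGaussianPDF (c : ℝ) :
    Integrable (fun w : ℂ => (‖w‖ ^ 2 + c) * complexGaussianPDF w) := by
  refine integrable_complex_fun_norm_iff (f := fun r => (r ^ 2 + c) * (1 / π * exp (-r ^ 2))) |>.2 ?_
  simp only [mul_sq_add_mul_gaussian_eq]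
  exact ((integrableOn_Ioi_pow_mul_exp_neg_sq _).const_mul _).add
    ((integrableOn_Ioi_pow_mul_exp_neg_sq _).const_mul _)

lemma integral_norm_sq_add_mul_complexGaussianPDF (c : ℝ) :
    ∫ w : ℂ, (‖w‖ ^ 2 + c) * complexGaussianPDF w = 1 + c := by
  unfold complexGaussianPDF
  rw [integral_complex_fun_norm (fun r => (r ^ 2 + c) * (1 / π * exp (-r ^ 2)))]
  simp only [mul_sq_add_mul_gaussian_eq]
  rw [integral_add ((integrableOn_Ioi_pow_mul_exp_neg_sq _).const_mul _)
      ((integrableOn_Ioi_pow_mul_exp_neg_sq _).const_mul _), integral_const_mul, integral_const_mul,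
    integral_Ioi_pow_mul_exp_neg_sq, integral_Ioi_pow_mul_exp_neg_sq]
  field_simp
  norm_num

lemma integrable_norm_sub_sq_mul_complexGaussianPDF (a : ℂ) :
    Integrable (fun w : ℂ => ‖w - a‖ ^ 2 * complexGaussianPDF w) := by
  refine ((integrable_norm_sq_add_mul_complexGaussianPDF (‖a‖ ^ 2)).const_mul 2).mono' ?_ ?_
  · unfold complexGaussianPDF
    fun_prop
  · refine .of_forall fun w => ?_
    rw [Real.norm_of_nonneg (mul_nonneg (sq_nonneg _) (complexGaussianPDF_nonneg w)), ← mul_assoc]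
    gcongr
    · exact complexGaussianPDF_nonneg w
    · nlinarith [norm_sub_le w a, norm_nonneg (w - a), sq_nonneg (‖w‖ - ‖a‖)]

/-- The parallelogram law `‖w - a‖² + ‖-w - a‖² = 2 (‖w‖² + ‖a‖²)` and the symmetry of the
density reduce the shifted second moment to a radial integral. -/
lemma integral_norm_sub_sq_mul_complexGaussianPDF (a : ℂ) :
    ∫ w : ℂ, ‖w - a‖ ^ 2 * complexGaussianPDF w = 1 + ‖a‖ ^ 2 := by
  set F : ℂ → ℝ := fun w => ‖w - a‖ ^ 2 * complexGaussianPDF w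
  have hF := integrable_norm_sub_sq_mul_complexGaussianPDF a
  have hsymm : ∫ w, F (-w) = ∫ w, F w := integral_neg_eq_self F volume
  have hsum : ∀ w, F w + F (-w) = 2 * ((‖w‖ ^ 2 + ‖a‖ ^ 2) * complexGaussianPDF w) := by
    intro w
    have hpar := parallelogram_law_with_norm ℝ w a
    simp only [F, complexGaussianPDF_neg, show ‖-w - a‖ = ‖w + a‖ by rw [← neg_add', norm_neg]]
    linear_combination complexGaussianPDF w * hpar
  have htwice : 2 * ∫ w, F w = 2 * (1 + ‖a‖ ^ 2) := calc
    2 * ∫ w, F w = ∫ w, (F w + F (-w)) := by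
      rw [integral_add hF hF.comp_neg, hsymm, two_mul]
    _ = 2 * ∫ w, (‖w‖ ^ 2 + ‖a‖ ^ 2) * complexGaussianPDF w := by
      simp only [hsum, integral_const_mul]
    _ = 2 * (1 + ‖a‖ ^ 2) := by rw [integral_norm_sq_add_mul_complexGaussianPDF]
  linarith

lemma norm_softThresh (y : ℂ) {τ : ℝ} (hτ : 0 ≤ τ) :
    ‖softThresh y τ‖ = if τ < ‖y‖ then ‖y‖ - τ else 0 := by
  unfold softThresh
  split_ifs with h
  · have hy : 0 < ‖y‖ := hτ.trans_lt h
    rw [norm_mul, Complex.norm_real,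
      Real.norm_of_nonneg (by rw [sub_nonneg, div_le_one hy]; exact h.le)]
    field_simp
  · exact norm_zero

lemma norm_softThresh_sub_le (y : ℂ) {μ τ : ℝ} (hμ : 0 ≤ μ) (hτ : 0 ≤ τ) :
    ‖softThresh y τ - μ‖ ≤ ‖y - (μ + τ : ℝ)‖ := by
  unfold softThresh
  split_ifs with h
  · have hy : 0 < ‖y‖ := hτ.trans_lt h
    have hre : y.re ≤ ‖y‖ := Complex.re_le_norm y
    have hy2 : ‖y‖ ^ 2 = y.re ^ 2 + y.im ^ 2 := by
      rw [Complex.sq_norm, Complex.normSq_apply]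
      ring
    set t := τ / ‖y‖
    have ht : 0 ≤ t := by positivity
    have hτt : τ = t * ‖y‖ := (div_mul_cancel₀ τ hy.ne').symm
    rw [← sq_le_sq₀ (norm_nonneg _) (norm_nonneg _), Complex.sq_norm, Complex.sq_norm,
      Complex.normSq_apply, Complex.normSq_apply]
    simp only [Complex.sub_re, Complex.sub_im, Complex.mul_re, Complex.mul_im, Complex.ofReal_re,
      Complex.ofReal_im, hτt, zero_mul, sub_zero, add_zero]
    -- the difference of the two sides is `2 t (‖y‖ - Re y) (‖y‖ + μ)`
    linear_combination 2 * mul_nonneg (mul_nonneg ht (sub_nonneg.2 hre)) (add_nonneg hy.le hμ) +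
      (2 * t - t ^ 2) * hy2
  · calc ‖0 - (μ : ℂ)‖ = ‖((μ + τ : ℝ) : ℂ)‖ - τ := by
          rw [Complex.norm_real, Real.norm_of_nonneg (add_nonneg hμ hτ)]
          simp [abs_of_nonneg hμ]
      _ ≤ ‖((μ + τ : ℝ) : ℂ)‖ - ‖y‖ := by linarith [not_lt.mp h]
      _ ≤ ‖y - (μ + τ : ℝ)‖ := by rw [norm_sub_rev]; exact norm_sub_norm_le _ _

lemma softRisk_eq_integral (μ τ : ℝ) :
    softRisk μ τ = ∫ w : ℂ, ‖softThresh (μ + w) τ - μ‖ ^ 2 * complexGaussianPDF w := by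
  rw [← Complex.volume_preserving_equiv_real_prod.symm.integral_comp']
  refine integral_congr_ae (.of_forall fun z => ?_)
  have hz : Complex.measurableEquivRealProd.symm z = z.1 + z.2 * Complex.I := by
    simp [Complex.ext_iff]
  simp only [complexGaussianPDF, hz, Complex.sq_norm, Complex.normSq_add_mul_I, add_assoc,
    mul_comm Complex.I]

lemma softRisk_nonneg (μ τ : ℝ) : 0 ≤ softRisk μ τ :=
  integral_nonneg fun _ => by positivity

lemma softRisk_zero {τ : ℝ} (hτ : 0 ≤ τ) : softRisk 0 τ = 2 * chi2 τ := by
  have hradial : ∀ r : ℝ, 0 < r →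
      r * ((if τ < r then r - τ else 0) ^ 2 * (1 / π * exp (-r ^ 2)))
        = (Ioi τ).indicator (fun ω => π⁻¹ * (ω * (ω - τ) ^ 2 * exp (-ω ^ 2))) r := by
    intro r _
    by_cases h : τ < r
    · rw [if_pos h, indicator_of_mem (mem_Ioi.2 h)]
      ring
    · rw [if_neg h, indicator_of_notMem (by simpa using h)]
      ring
  simp only [softRisk_eq_integral, Complex.ofReal_zero, zero_add, sub_zero, complexGaussianPDF,
    norm_softThresh _ hτ]
  rw [integral_complex_fun_norm
      (fun r => (if τ < r then r - τ else 0) ^ 2 * (1 / π * exp (-r ^ 2))),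
    setIntegral_congr_fun measurableSet_Ioi hradial, integral_indicator measurableSet_Ioi,
    Measure.restrict_restrict measurableSet_Ioi, Ioi_inter_Ioi, max_eq_left hτ,
    integral_const_mul, chi2]
  field_simp

lemma softRisk_le {μ τ : ℝ} (hμ : 0 ≤ μ) (hτ : 0 ≤ τ) : softRisk μ τ ≤ 1 + τ ^ 2 := by
  have hbound : ∀ w : ℂ, ‖softThresh (μ + w) τ - μ‖ ^ 2 * complexGaussianPDF w
      ≤ ‖w - τ‖ ^ 2 * complexGaussianPDF w := by
    intro w
    have h := norm_softThresh_sub_le (μ + w) hμ hτ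
    rw [Complex.ofReal_add, add_sub_add_left_eq_sub] at h
    gcongr
    exact complexGaussianPDF_nonneg w
  calc softRisk μ τ ≤ ∫ w : ℂ, ‖w - τ‖ ^ 2 * complexGaussianPDF w := by
        rw [softRisk_eq_integral]
        exact integral_mono_of_nonneg (.of_forall fun w => mul_nonneg (sq_nonneg _)
          (complexGaussianPDF_nonneg w)) (integrable_norm_sub_sq_mul_complexGaussianPDF _)
          (.of_forall hbound)
    _ = 1 + τ ^ 2 := by
        rw [integral_norm_sub_sq_mul_complexGaussianPDF, Complex.norm_real, Real.norm_eq_abs,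
          sq_abs]

lemma chi2_nonneg {τ : ℝ} (hτ : 0 ≤ τ) : 0 ≤ chi2 τ := by
  refine setIntegral_nonneg measurableSet_Ioi fun ω hω => ?_
  have : 0 ≤ ω := hτ.trans (le_of_lt hω)
  positivity

-- `δ L` in the notation of the theorem
noncomputable def riskBound (ν : Measure ℂ) (τ : ℝ) : ℝ :=
  (1 - ν.real {x | x ≠ 0}) * (2 * chi2 τ) + ν.real {x | x ≠ 0} * (1 + τ ^ 2)

section ProbabilityMeasure

variable (ν : Measure ℂ) [IsProbabilityMeasure ν] {τ : ℝ}

lemma riskBound_nonneg (hτ : 0 ≤ τ) : 0 ≤ riskBound ν τ :=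
  add_nonneg (mul_nonneg (sub_nonneg.2 measureReal_le_one) (by linarith [chi2_nonneg hτ]))
    (mul_nonneg measureReal_nonneg (by positivity))

lemma integral_softRisk_le_riskBound (hτ : 0 ≤ τ) {s : ℝ} (hs : 0 ≤ s) :
    ∫ x, softRisk (‖x‖ / s) τ ∂ν ≤ riskBound ν τ := by
  set S : Set ℂ := {x | x ≠ 0}
  have hS : MeasurableSet S := (measurableSet_singleton 0).compl
  have hS₁ : Integrable (S.indicator fun _ => 1 + τ ^ 2) ν := (integrable_const _).indicator hS
  have hS₀ : Integrable (Sᶜ.indicator fun _ => 2 * chi2 τ) ν :=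
    (integrable_const _).indicator hS.compl
  have hle : ∀ x, softRisk (‖x‖ / s) τ
      ≤ S.indicator (fun _ => 1 + τ ^ 2) x + Sᶜ.indicator (fun _ => 2 * chi2 τ) x := by
    intro x
    by_cases hx : x = 0
    · simp [S, hx, softRisk_zero hτ]
    · simpa [S, hx] using softRisk_le (by positivity) hτ
  -- `x ↦ softRisk (‖x‖ / s) τ` is not known to be measurable, hence the majorant
  calc ∫ x, softRisk (‖x‖ / s) τ ∂ν
      ≤ ∫ x, (S.indicator (fun _ => 1 + τ ^ 2) x + Sᶜ.indicator (fun _ => 2 * chi2 τ) x) ∂ν :=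
        integral_mono_of_nonneg (.of_forall fun _ => softRisk_nonneg _ _) (hS₁.add hS₀)
          (.of_forall hle)
    _ = riskBound ν τ := by
        rw [integral_add hS₁ hS₀, integral_indicator_const _ hS,
          integral_indicator_const _ hS.compl, probReal_compl_eq_one_sub hS, riskBound,
          smul_eq_mul, smul_eq_mul]
        ring

lemma mseMap_le_mul_riskBound (hτ : 0 ≤ τ) {δ σ m : ℝ} (hδ : 0 < δ) (hm : 0 ≤ m) :
    mseMap ν δ σ τ m ≤ (σ ^ 2 + m / δ) * riskBound ν τ :=
  mul_le_mul_of_nonneg_left (integral_softRisk_le_riskBound ν hτ (sqrt_nonneg _)) (by positivity)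

end ProbabilityMeasure

lemma mseMap_nonneg (ν : Measure ℂ) {δ σ τ m : ℝ} (hδ : 0 < δ) (hm : 0 ≤ m) :
    0 ≤ mseMap ν δ σ τ m :=
  mul_nonneg (by positivity) (integral_nonneg fun _ => softRisk_nonneg _ _)

/-- Linear convergence bound for noiseless state evolution: with `ε = ν({x ≠ 0})` and
`L = ((1−ε)·2χ₂(τ) + ε(1+τ²))/δ` (the slope of the noiseless MSE map at `m = 0`),
the iterates `m_{t+1} = Ψ(m_t)` with any `m₀ ≥ 0` satisfy `m_t ≤ L^t · m₀` for all `t`. -/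
theorem mseMap_linear_convergence (ν : Measure ℂ) (hν : IsProbabilityMeasure ν)
    (δ τ : ℝ) (hδ : 0 < δ) (hτ : 0 ≤ τ)
    (L : ℝ)
    (hL : L = ((1 - (ν {x : ℂ | x ≠ 0}).toReal) * (2 * chi2 τ) +
        (ν {x : ℂ | x ≠ 0}).toReal * (1 + τ ^ 2)) / δ)
    (m₀ : ℝ) (hm₀ : 0 ≤ m₀) (seq : ℕ → ℝ) (h0 : seq 0 = m₀)
    (hrec : ∀ t : ℕ, seq (t + 1) = mseMap ν δ 0 τ (seq t)) :
    ∀ t : ℕ, seq t ≤ L ^ t * m₀ := by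
  replace hL : L = riskBound ν τ / δ := hL
  have hL₀ : 0 ≤ L := hL ▸ div_nonneg (riskBound_nonneg ν hτ) hδ.le
  have hstep : ∀ m, 0 ≤ m → mseMap ν δ 0 τ m ≤ L * m := fun m hm =>
    calc mseMap ν δ 0 τ m ≤ (0 ^ 2 + m / δ) * riskBound ν τ := mseMap_le_mul_riskBound ν hτ hδ hm
      _ = L * m := by rw [hL]; ring
  have hseq : ∀ t, 0 ≤ seq t := by
    intro t
    induction t with
    | zero => exact h0 ▸ hm₀
    | succ t ih => exact hrec t ▸ mseMap_nonneg ν hδ ih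
  intro t
  simpa [h0] using le_geom hL₀ t fun k _ => (hrec k).trans_le (hstep _ (hseq k))
end
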